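/- Fix an integer h ≥ 2 and a function f: ℕ → ℕ with f(n) → ∞ and f(n) = o(n^{h−1}) as n → ∞. Then the family of all A ⊆ ℕ such that limsup_{n→∞} r_{A,h}(n)/f(n) = ∞ is comeager in the Cantor space 𝒫(ℕ). -/

import Mathlib

open Filter Topology Set
open scoped ENNReal

/-- Number of unordered representations of `x` as a sum of `h` elements of `A`
(repetitions allowed): multisets of size `h` with elements in `A` summing to `x`. -/
noncomputable def repCount {X : Type*} [AddCommMonoid X] (A : Set X) (h : ℕ) (x : X) : ℕ :=
  Nat.card {s : Multiset X // Multiset.card s = h ∧ (∀ a ∈ s, a ∈ A) ∧ s.sum = x}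

/-- `A` is a `B_h[g]` set: every `x` has at most `g` unordered representations. -/
def IsBhg {X : Type*} [AddCommMonoid X] (A : Set X) (h g : ℕ) : Prop :=
  ∀ x, repCount A h x ≤ g

/-- `A ⊆ ℕ` is a Sidon set. -/
def IsSidonSet (A : Set ℕ) : Prop :=
  ∀ a b c d, a ∈ A → b ∈ A → c ∈ A → d ∈ A → a ≤ b → c ≤ d → a + b = c + d → a = c ∧ b = d

/-- Lower asymptotic density. -/
noncomputable def lowerDensity (S : Set ℕ) : ℝ :=
  Filter.liminf (fun n => ((S ∩ Set.Ico 0 n).ncard : ℝ) / n) Filter.atTop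

/-- Upper asymptotic density. -/
noncomputable def upperDensity (S : Set ℕ) : ℝ :=
  Filter.limsup (fun n => ((S ∩ Set.Ico 0 n).ncard : ℝ) / n) Filter.atTop

/-!
Let `V c N` be the set of `A` such that `c * f n < r_{A,h}(n)` for some `n ≥ N`. It is open,
because `r_{A,h}(n)` only depends on `A ∩ [0, n]`, and it is dense, because it contains every
cofinite `A`: if `A ⊇ (m, ∞)`, choosing `h - 1` parts independently in `h - 1` disjoint blocks of
length `L` above `m` and one balancing part gives `L ^ (h - 1)` representations of a single
`n ≤ C L`, which beats `c * f n = o(n ^ (h - 1))` for large `L`. Every `A` in the countable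
intersection of the `V c N` has `limsup r_{A,h}(n) / f(n) = ∞`.
-/

section CanonicallyOrdered

variable {X : Type*} [AddCommMonoid X] [PartialOrder X] [CanonicallyOrderedAdd X]

theorem repCount_congr {A B : Set X} {h : ℕ} {x : X} (hAB : ∀ y ≤ x, y ∈ A ↔ y ∈ B) :
    repCount A h x = repCount B h x := by
  refine Nat.card_congr (Equiv.subtypeEquivRight fun s => and_congr_right fun _ => ?_)
  constructor <;> rintro ⟨hs, rfl⟩ <;> refine ⟨fun a ha => ?_, rfl⟩
  · exact (hAB a (Multiset.le_sum_of_mem ha)).1 (hs a ha)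
  · exact (hAB a (Multiset.le_sum_of_mem ha)).2 (hs a ha)

theorem finite_repMultisets [LocallyFiniteOrderBot X] (A : Set X) (h : ℕ) (x : X) :
    Finite {s : Multiset X // Multiset.card s = h ∧ (∀ a ∈ s, a ∈ A) ∧ s.sum = x} := by
  classical
  refine Finite.of_injective (β := (Finset.Iic x).sym h)
    (fun s => ⟨⟨s.1, s.2.1⟩, Finset.mem_sym_iff.2 fun a ha =>
      Finset.mem_Iic.2 (s.2.2.2 ▸ Multiset.le_sum_of_mem ha)⟩) fun s t hst => ?_
  exact Subtype.ext (congrArg (fun u : (Finset.Iic x).sym h => (u.1 : Multiset X)) hst)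

theorem natCard_le_repCount [LocallyFiniteOrderBot X] {ι : Type*} {A : Set X} {h : ℕ} {x : X}
    (g : ι → Multiset X) (hg : Function.Injective g) (hcard : ∀ i, Multiset.card (g i) = h)
    (hA : ∀ i, ∀ a ∈ g i, a ∈ A) (hsum : ∀ i, (g i).sum = x) :
    Nat.card ι ≤ repCount A h x :=
  have := finite_repMultisets A h x
  Nat.card_le_card_of_injective (fun i => ⟨g i, hcard i, hA i, hsum i⟩)
    fun _ _ hij => hg (congrArg Subtype.val hij)

end CanonicallyOrdered

theorem continuous_repCount (h n : ℕ) :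
    Continuous fun A : ℕ → Bool => repCount {m | A m = true} h n := by
  refine continuous_iff_continuousAt.2 fun A => ?_
  rw [ContinuousAt, nhds_discrete ℕ, tendsto_pure]
  have hnhds : (Iic n).pi (fun i => {A i}) ∈ 𝓝 A :=
    (isOpen_set_pi (finite_Iic n) fun _ _ => isOpen_discrete _).mem_nhds (by simp)
  filter_upwards [hnhds] with B hB
  exact repCount_congr fun y hy => by simp [show B y = A y from hB y hy]

theorem dense_setOf_eventually_eq {X : Type*} [TopologicalSpace X] (b : X) :
    Dense {g : ℕ → X | ∀ᶠ n in atTop, g n = b} := by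
  intro g
  refine mem_closure_of_tendsto (f := fun N n => if n < N then g n else b) (b := atTop) ?_ ?_
  · refine tendsto_pi_nhds.2 fun n => tendsto_nhds_of_eventually_eq ?_
    filter_upwards [eventually_gt_atTop n] with N hN
    simp [hN]
  · refine Eventually.of_forall fun N => ?_
    filter_upwards [eventually_ge_atTop N] with n hn
    simp [not_lt.2 hn]

theorem limsup_eq_top_of_frequently_natCast_le {α : Type*} {l : Filter α} {u : α → ℝ≥0∞}
    (hu : ∀ k : ℕ, ∃ᶠ a in l, (k : ℝ≥0∞) ≤ u a) : limsup u l = ⊤ := by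
  by_contra hne
  obtain ⟨k, hk⟩ := ENNReal.exists_nat_gt hne
  exact (le_limsup_of_frequently_le' (hu k)).not_gt hk

theorem natCast_le_div_of_mul_lt {a b c : ℕ} (h : c * b < a) :
    (c : ℝ≥0∞) ≤ (a : ℝ≥0∞) / (b : ℝ≥0∞) := by
  refine (ENNReal.le_div_iff_mul_le (Or.inr ?_) (Or.inl (ENNReal.natCast_ne_top b))).2 ?_
  · exact Nat.cast_ne_zero.2 (Nat.zero_le _ |>.trans_lt h).ne'
  · exact_mod_cast h.le

theorem eventually_mul_lt_pow_of_tendsto_div {f : ℕ → ℕ} {k : ℕ}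
    (hf : Tendsto (fun n : ℕ => (f n : ℝ) / (n : ℝ) ^ k) atTop (𝓝 0)) (c : ℕ) :
    ∀ᶠ n in atTop, c * f n < n ^ k := by
  filter_upwards [hf.eventually (gt_mem_nhds (by positivity : (0 : ℝ) < ((c : ℝ) + 1)⁻¹)),
    eventually_ge_atTop 1] with n hn hn1
  have hpos : (0 : ℝ) < (n : ℝ) ^ k := by positivity
  rw [div_lt_iff₀ hpos, inv_mul_eq_div, lt_div_iff₀' (by positivity)] at hn
  have : (c + 1) * f n < n ^ k := by exact_mod_cast hn
  exact lt_of_le_of_lt (Nat.mul_le_mul_right _ c.le_succ) this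

theorem pow_le_repCount_of_Ioi_subset {A : Set ℕ} {m : ℕ} (hA : Ioi m ⊆ A) (k L : ℕ) :
    L ^ k ≤ repCount A (k + 1) ((k + 1) * (m + 1) + L * (∑ j : Fin k, (j : ℕ) + 2 * k + 1)) := by
  set M := m + 1 with hM
  have hsum_le : ∀ i : Fin k → Fin L, ∑ j, (i j : ℕ) ≤ k * L := fun i => by
    simpa using Finset.sum_le_sum fun j (_ : j ∈ Finset.univ) => (i j).isLt.le
  have hexpand : (2 * k + 1) * L = k * L + (k * L + L) := by ring
  -- part `j < k` lies in the block `[M + L * j, M + L * (j + 1))`; the head part balances the sum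
  -- and lies above all blocks, so `g i` determines `i`
  let g : (Fin k → Fin L) → Multiset ℕ := fun i =>
    (M + (2 * k + 1) * L - ∑ j, (i j : ℕ)) ::ₘ Finset.univ.val.map fun j => M + L * j + i j
  have hdecode : ∀ (a : Fin k) (b : Fin L), (L * a + b) / L = a ∧ (L * a + b) % L = b :=
    fun a b => (Nat.div_mod_unique (Fin.pos b)).2 ⟨add_comm _ _, b.isLt⟩
  have hg : Function.Injective g := by
    intro i i' hii'
    funext j
    have hx : M + L * j + i j ∈ g i' :=
      hii' ▸ Multiset.mem_cons_of_mem (Multiset.mem_map_of_mem _ (Finset.mem_univ_val j))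
    rcases Multiset.mem_cons.1 hx with hx | hx
    · have hj : L * j + L ≤ k * L := by
        simpa [mul_add, mul_comm] using Nat.mul_le_mul_left L j.isLt
      have := hsum_le i'
      have := (i j).isLt
      omega
    · obtain ⟨j', -, hj'⟩ := Multiset.mem_map.1 hx
      have hblock : L * j' + i' j' = L * j + i j := by omega
      have hjj' : j' = j := Fin.ext <| by
        rw [← (hdecode j' (i' j')).1, hblock, (hdecode j (i j)).1]
      subst hjj'
      exact Fin.ext <| by rw [← (hdecode j' (i j')).2, ← hblock, (hdecode j' (i' j')).2]
  calc L ^ k = Nat.card (Fin k → Fin L) := by simp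
    _ ≤ _ := natCard_le_repCount g hg (fun i => by simp [g]) ?_ ?_
  · intro i a ha
    have := hsum_le i
    rcases Multiset.mem_cons.1 ha with rfl | ha
    · exact hA (by rw [mem_Ioi]; omega)
    · obtain ⟨j, -, rfl⟩ := Multiset.mem_map.1 ha
      exact hA (by rw [mem_Ioi]; omega)
  · intro i
    have := hsum_le i
    simp only [g, Multiset.sum_cons, Finset.sum_map_val, Finset.sum_add_distrib, ← Finset.mul_sum,
      Finset.sum_const, Finset.card_univ, Fintype.card_fin, smul_eq_mul]
    rw [hexpand]
    have : L * (∑ j : Fin k, (j : ℕ) + 2 * k + 1) + (k + 1) * M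
        = k * M + L * ∑ j : Fin k, (j : ℕ) + (M + (k * L + (k * L + L))) := by ring
    omega

theorem exists_lt_repCount {A : Set ℕ} (hA : ∀ᶠ x in atTop, x ∈ A) {k : ℕ} {f : ℕ → ℕ}
    (hf : ∀ c : ℕ, ∀ᶠ n in atTop, c * f n < n ^ k) (c N : ℕ) :
    ∃ n ≥ N, c * f n < repCount A (k + 1) n := by
  obtain ⟨m, hm⟩ := eventually_atTop.1 hA
  set B := ∑ j : Fin k, (j : ℕ) + 2 * k + 1
  set C := (k + 1) * (m + 1) + B
  obtain ⟨N₀, hN₀⟩ := eventually_atTop.1 (hf (C ^ k * c))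
  set L := N + N₀ + 1
  set n := (k + 1) * (m + 1) + L * B
  have hLn : L ≤ n := le_add_left (Nat.le_mul_of_pos_right L (by omega))
  have hnC : n ≤ C * L := calc
    n = (k + 1) * (m + 1) + B * L := by rw [mul_comm B]
    _ ≤ (k + 1) * (m + 1) * L + B * L :=
      Nat.add_le_add_right (Nat.le_mul_of_pos_right _ (by omega)) _
    _ = C * L := (add_mul _ _ _).symm
  refine ⟨n, by omega, Nat.lt_of_mul_lt_mul_left (a := C ^ k) ?_ |>.trans_le
    (pow_le_repCount_of_Ioi_subset (fun x hx => hm x (le_of_lt hx)) k L)⟩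
  calc C ^ k * (c * f n) = C ^ k * c * f n := (mul_assoc _ _ _).symm
    _ < n ^ k := hN₀ n (by omega)
    _ ≤ (C * L) ^ k := Nat.pow_le_pow_left hnC k
    _ = C ^ k * L ^ k := mul_pow _ _ _

theorem stmt9_general (h : ℕ) (hh : 2 ≤ h) (f : ℕ → ℕ)
    (hsmall : Filter.Tendsto (fun n : ℕ => (f n : ℝ) / (n : ℝ) ^ (h - 1))
      Filter.atTop (nhds 0)) :
    {A : ℕ → Bool |
      Filter.limsup
        (fun n => (repCount {m | A m = true} h n : ℝ≥0∞) / (f n : ℝ≥0∞)) Filter.atTop = ⊤}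
      ∈ residual (ℕ → Bool) := by
  obtain ⟨k, rfl⟩ : ∃ k, h = k + 1 := ⟨h - 1, by omega⟩
  rw [Nat.add_sub_cancel] at hsmall
  have hf := eventually_mul_lt_pow_of_tendsto_div hsmall
  let V : ℕ × ℕ → Set (ℕ → Bool) := fun p =>
    ⋃ n ≥ p.2, {A | p.1 * f n < repCount {m | A m = true} (k + 1) n}
  have hV : ∀ p, V p ∈ residual (ℕ → Bool) := fun p =>
    residual_of_dense_open
      (isOpen_biUnion fun n _ => isOpen_lt continuous_const (continuous_repCount _ n))
      ((dense_setOf_eventually_eq true).mono fun A hA => by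
        simpa [V] using exists_lt_repCount (A := {m | A m = true}) hA hf p.1 p.2)
  filter_upwards [countable_iInter_mem.2 hV] with A hA
  refine limsup_eq_top_of_frequently_natCast_le fun c => frequently_atTop.2 fun N => ?_
  obtain ⟨n, hnN, hn⟩ := by simpa [V] using mem_iInter.1 hA (c, N)
  exact ⟨n, hnN, natCast_le_div_of_mul_lt hn⟩

theorem stmt9 (h : ℕ) (hh : 2 ≤ h) (f : ℕ → ℕ)
    (hdiv : Filter.Tendsto f Filter.atTop Filter.atTop)
    (hsmall : Filter.Tendsto (fun n : ℕ => (f n : ℝ) / (n : ℝ) ^ (h - 1))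
      Filter.atTop (nhds 0)) :
    {A : ℕ → Bool |
      Filter.limsup
        (fun n => (repCount {m | A m = true} h n : ℝ≥0∞) / (f n : ℝ≥0∞)) Filter.atTop = ⊤}
      ∈ residual (ℕ → Bool) :=
  stmt9_general h hh f hsmall
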